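/- First-order unification is decidable and computes most general unifiers: for any two terms M₁ and M₂, either they have no unifier, or there exists a unifier σ such that σ(M₁) = σ(M₂) and for every unifier σ' of M₁ and M₂ there exists a substitution σ* with σ' = σ* ∘ σ. -/

import Mathlib

/-- First-order terms: variables or constructor applications. -/
inductive Tm where
  | var : ℕ → Tm
  | app : ℕ → List Tm → Tm

/-- The occurs relation `x ∈ M`. -/
inductive Occurs : ℕ → Tm → Prop where
  | var : ∀ {x}, Occurs x (.var x)
  | app : ∀ {x c Ms M}, M ∈ Ms → Occurs x M → Occurs x (.app c Ms)

/-- The non-occurs relation `x ∉ M`. -/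
inductive NotOccurs : ℕ → Tm → Prop where
  | var : ∀ {x y}, x ≠ y → NotOccurs x (.var y)
  | app : ∀ {x c Ms}, (∀ M ∈ Ms, NotOccurs x M) → NotOccurs x (.app c Ms)

/-- Strict substructure relation `M ⊏ M'`. -/
inductive Substr : Tm → Tm → Prop where
  | base : ∀ {M c Ms}, M ∈ Ms → Substr M (.app c Ms)
  | ind : ∀ {M Mi c Ms}, Mi ∈ Ms → Substr M Mi → Substr M (.app c Ms)

/-- Homomorphic extension of a substitution `σ : ℕ → Tm` to terms. -/
def applySub (σ : ℕ → Tm) : Tm → Tm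
  | .var y => σ y
  | .app c Ms => .app c (Ms.attach.map (fun ⟨m, _⟩ => applySub σ m))
  decreasing_by have := List.sizeOf_lt_of_mem ‹_›; simp_all; omega

/-- The single substitution `[M/x]`. -/
def single (M : Tm) (x : ℕ) : ℕ → Tm := fun y => if y = x then M else .var y

/-- Capture-free substitution `[M/x]M'`. -/
def subst (M : Tm) (x : ℕ) (M' : Tm) : Tm := applySub (single M x) M'

/-! The Martelli–Montanari algorithm, run on finite systems of equations. Deleting `x ≐ x`,
decomposing `c Ms ≐ c Ns` into the equations `Ms ≐ Ns`, and eliminating `x ≐ N` with `x ∉ N`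
by substituting `N` for `x` in the remaining equations all preserve the set of unifiers, and an
mgu `θ` of the eliminated system yields the mgu `θ ∘ [N/x]` of the original one. A unifiable
system admits no clash `c Ms ≐ d Ns` with `c ≠ d`, and no equation `x ≐ N` with `N ≠ x` and
`x` occurring in `N`, since `σ x` would then be a proper subterm of `σ N`. Elimination
decreases the number of variables of the system; the other steps add no variable and make the
system smaller. -/

theorem List.map_eq_map_iff_forall_mem_zip {α β : Type*} {f : α → β} :
    ∀ {l₁ l₂ : List α},
      l₁.map f = l₂.map f ↔ l₁.length = l₂.length ∧ ∀ p ∈ l₁.zip l₂, f p.1 = f p.2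
  | [], [] | [], _ :: _ | _ :: _, [] => by simp
  | a :: l₁, b :: l₂ => by
    simp only [map_cons, cons.injEq, map_eq_map_iff_forall_mem_zip, length_cons,
      Nat.add_right_cancel_iff, zip_cons_cons, forall_mem_cons]
    tauto

@[induction_eliminator]
theorem Tm.induction {motive : Tm → Prop} (var : ∀ x, motive (.var x))
    (app : ∀ c Ms, (∀ M ∈ Ms, motive M) → motive (.app c Ms)) (M : Tm) : motive M :=
  Tm.rec (motive_2 := fun Ms => ∀ M ∈ Ms, motive M) var app
    (fun _ h => absurd h List.not_mem_nil)
    (fun _ _ hM hMs => List.forall_mem_cons.2 ⟨hM, hMs⟩) M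

mutual
def vars : Tm → Finset ℕ
  | .var x => {x}
  | .app _ Ms => varsList Ms

def varsList : List Tm → Finset ℕ
  | [] => ∅
  | M :: Ms => vars M ∪ varsList Ms
end

@[simp] theorem vars_var (x : ℕ) : vars (.var x) = {x} := by simp [vars]

@[simp] theorem mem_vars_app {x c Ms} : x ∈ vars (.app c Ms) ↔ ∃ M ∈ Ms, x ∈ vars M := by
  rw [vars]
  induction Ms with
  | nil => simp [varsList]
  | cons M Ms ih => simp [varsList, ih]

@[simp] theorem applySub_var (σ : ℕ → Tm) (x : ℕ) : applySub σ (.var x) = σ x := by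
  rw [applySub]

@[simp] theorem applySub_app (σ : ℕ → Tm) (c : ℕ) (Ms : List Tm) :
    applySub σ (.app c Ms) = .app c (Ms.map (applySub σ)) := by
  rw [applySub]
  simp

theorem applySub_congr {σ τ : ℕ → Tm} {M : Tm} (h : ∀ x ∈ vars M, σ x = τ x) :
    applySub σ M = applySub τ M := by
  induction M with
  | var x => simpa using h
  | app c Ms ih =>
    simp only [applySub_app, Tm.app.injEq, true_and, List.map_inj_left]
    exact fun M hM => ih M hM fun x hx => h x (mem_vars_app.2 ⟨M, hM, hx⟩)

@[simp] theorem applySub_var_left (M : Tm) : applySub .var M = M := by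
  induction M with
  | var x => simp
  | app c Ms ih => simpa using List.map_congr_left ih

theorem applySub_applySub (τ σ : ℕ → Tm) (M : Tm) :
    applySub τ (applySub σ M) = applySub (fun y => applySub τ (σ y)) M := by
  induction M with
  | var x => simp
  | app c Ms ih => simpa using ih

theorem subst_eq_self {N : Tm} {x : ℕ} {M : Tm} (hx : x ∉ vars M) : subst N x M = M := by
  rw [subst, applySub_congr (τ := .var) fun y hy => ?_, applySub_var_left]
  simp [single, show y ≠ x from fun h => hx (h ▸ hy)]

theorem vars_subst_subset (N : Tm) (x : ℕ) (M : Tm) :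
    vars (subst N x M) ⊆ (vars M).erase x ∪ vars N := by
  induction M with
  | var y =>
    by_cases hy : y = x <;> simp [subst, single, hy]
  | app c Ms ih =>
    intro z hz
    simp only [subst, applySub_app, mem_vars_app, List.mem_map] at hz
    obtain ⟨_, ⟨M, hM, rfl⟩, hzM⟩ := hz
    have := ih M hM hzM
    simp only [Finset.mem_union, Finset.mem_erase, mem_vars_app] at this ⊢
    exact this.imp_left fun ⟨hzx, hz⟩ => ⟨hzx, M, hM, hz⟩

theorem applySub_single_of_eq {σ : ℕ → Tm} {N : Tm} {x : ℕ} (h : σ x = applySub σ N) (y : ℕ) :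
    applySub σ (single N x y) = σ y := by
  by_cases hy : y = x <;> simp [single, hy, h]

theorem applySub_subst_of_eq {σ : ℕ → Tm} {N : Tm} {x : ℕ} (h : σ x = applySub σ N) (M : Tm) :
    applySub σ (subst N x M) = applySub σ M := by
  simp only [subst, applySub_applySub, applySub_single_of_eq h]

theorem sizeOf_lt_applySub {σ : ℕ → Tm} {x : ℕ} {M : Tm} (hx : x ∈ vars M) (hM : M ≠ .var x) :
    sizeOf (σ x) < sizeOf (applySub σ M) := by
  induction M with
  | var y => simp_all
  | app c Ms ih =>
    obtain ⟨Mi, hMi, hxMi⟩ := mem_vars_app.1 hx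
    have hlt : sizeOf (applySub σ Mi) < sizeOf (applySub σ (.app c Ms)) := by
      have := List.sizeOf_lt_of_mem (List.mem_map_of_mem (f := applySub σ) hMi)
      simp only [applySub_app, Tm.app.sizeOf_spec]
      omega
    by_cases hMi' : Mi = .var x
    · simpa [hMi'] using hlt
    · exact (ih Mi hMi hxMi hMi').trans hlt

theorem notMem_vars_of_eq_applySub {σ : ℕ → Tm} {x : ℕ} {M : Tm} (hM : M ≠ .var x)
    (h : σ x = applySub σ M) : x ∉ vars M :=
  fun hx => (sizeOf_lt_applySub hx hM).ne (congrArg sizeOf h)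

def Unifies (σ : ℕ → Tm) (E : List (Tm × Tm)) : Prop :=
  ∀ p ∈ E, applySub σ p.1 = applySub σ p.2

def IsMoreGeneral (σ σ' : ℕ → Tm) : Prop :=
  ∃ τ : ℕ → Tm, ∀ y, σ' y = applySub τ (σ y)

def IsMGU (σ : ℕ → Tm) (E : List (Tm × Tm)) : Prop :=
  Unifies σ E ∧ ∀ σ', Unifies σ' E → IsMoreGeneral σ σ'

def substE (N : Tm) (x : ℕ) (E : List (Tm × Tm)) : List (Tm × Tm) :=
  E.map (Prod.map (subst N x) (subst N x))

section Unifies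

variable {σ : ℕ → Tm} {E : List (Tm × Tm)}

@[simp] theorem unifies_nil : Unifies σ [] := List.forall_mem_nil _

@[simp] theorem unifies_cons {M N : Tm} :
    Unifies σ ((M, N) :: E) ↔ applySub σ M = applySub σ N ∧ Unifies σ E :=
  List.forall_mem_cons

theorem unifies_append {E' : List (Tm × Tm)} :
    Unifies σ (E ++ E') ↔ Unifies σ E ∧ Unifies σ E' :=
  List.forall_mem_append

theorem unifies_cons_comm {M N : Tm} : Unifies σ ((M, N) :: E) ↔ Unifies σ ((N, M) :: E) := by
  simp [eq_comm]

theorem unifies_substE {N : Tm} {x : ℕ} :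
    Unifies σ (substE N x E) ↔ Unifies (fun y => applySub σ (single N x y)) E := by
  simp only [Unifies, substE, List.forall_mem_map, Prod.map, subst, applySub_applySub]

theorem unifies_substE_of_eq {N : Tm} {x : ℕ} (h : σ x = applySub σ N) :
    Unifies σ (substE N x E) ↔ Unifies σ E := by
  simp only [unifies_substE, applySub_single_of_eq h]

theorem applySub_app_eq_app_iff {c d : ℕ} {Ms Ns : List Tm} :
    applySub σ (.app c Ms) = applySub σ (.app d Ns) ↔
      c = d ∧ Ms.length = Ns.length ∧ Unifies σ (Ms.zip Ns) := by
  simp only [applySub_app, Tm.app.injEq, List.map_eq_map_iff_forall_mem_zip, Unifies]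

theorem unifies_cons_app_app {c : ℕ} {Ms Ns : List Tm} (hl : Ms.length = Ns.length) :
    Unifies σ ((.app c Ms, .app c Ns) :: E) ↔ Unifies σ (Ms.zip Ns ++ E) := by
  simp only [unifies_cons, applySub_app_eq_app_iff, unifies_append, hl, true_and]

end Unifies

theorem isMGU_congr {E₁ E₂ : List (Tm × Tm)} (h : ∀ σ, Unifies σ E₁ ↔ Unifies σ E₂)
    {σ : ℕ → Tm} : IsMGU σ E₁ ↔ IsMGU σ E₂ := by
  simp only [IsMGU, h]

theorem isMGU_var_nil : IsMGU .var [] :=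
  ⟨unifies_nil, fun σ' _ => ⟨σ', fun y => (applySub_var σ' y).symm⟩⟩

theorem isMGU_cons_var {σ : ℕ → Tm} {x : ℕ} {N : Tm} {E : List (Tm × Tm)} (hx : x ∉ vars N)
    (h : IsMGU σ (substE N x E)) :
    IsMGU (fun y => applySub σ (single N x y)) ((.var x, N) :: E) := by
  refine ⟨unifies_cons.2 ⟨?_, unifies_substE.1 h.1⟩, fun σ' hσ' => ?_⟩
  · rw [applySub_var, ← applySub_applySub, ← subst, subst_eq_self hx]
    simp [single]
  obtain ⟨hx', hE⟩ := unifies_cons.1 hσ'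
  rw [applySub_var] at hx'
  obtain ⟨τ, hτ⟩ := h.2 σ' ((unifies_substE_of_eq hx').2 hE)
  refine ⟨τ, fun y => ?_⟩
  rw [← applySub_single_of_eq hx' y, funext hτ, ← applySub_applySub]

theorem sizeOf_zip_append_lt (E : List (Tm × Tm)) :
    ∀ Ms Ns : List Tm, sizeOf (Ms.zip Ns ++ E) < sizeOf Ms + sizeOf Ns + sizeOf E
  | [], _ | _ :: _, [] => by simp
  | M :: Ms, N :: Ns => by
    have := sizeOf_zip_append_lt E Ms Ns
    simp only [List.zip_cons_cons, List.cons_append, List.cons.sizeOf_spec, Prod.mk.sizeOf_spec]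
    omega

def varsE : List (Tm × Tm) → Finset ℕ
  | [] => ∅
  | (M, N) :: E => vars M ∪ vars N ∪ varsE E

@[simp] theorem varsE_cons (M N : Tm) (E : List (Tm × Tm)) :
    varsE ((M, N) :: E) = vars M ∪ vars N ∪ varsE E := rfl

theorem varsE_append (E E' : List (Tm × Tm)) : varsE (E ++ E') = varsE E ∪ varsE E' := by
  induction E with
  | nil => simp [varsE]
  | cons p E ih => simp [varsE, ih, Finset.union_assoc]

theorem mem_varsE {z : ℕ} {E : List (Tm × Tm)} :
    z ∈ varsE E ↔ ∃ p ∈ E, z ∈ vars p.1 ∨ z ∈ vars p.2 := by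
  induction E with
  | nil => simp [varsE]
  | cons p E ih => simp [varsE, ih, or_assoc]

theorem varsE_substE_subset (N : Tm) (x : ℕ) (E : List (Tm × Tm)) :
    varsE (substE N x E) ⊆ (varsE E).erase x ∪ vars N := by
  intro z hz
  obtain ⟨_, hp, hz⟩ := mem_varsE.1 hz
  obtain ⟨p, hp, rfl⟩ := List.mem_map.1 hp
  have := hz.imp (vars_subst_subset N x p.1 ·) (vars_subst_subset N x p.2 ·)
  simp only [Finset.mem_union, Finset.mem_erase, mem_varsE] at this ⊢
  grind

theorem card_varsE_substE_lt {N : Tm} {x : ℕ} {E : List (Tm × Tm)} {S : Finset ℕ}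
    (hx : x ∉ vars N) (hxS : x ∈ S) (hNS : vars N ⊆ S) (hES : varsE E ⊆ S) :
    (varsE (substE N x E)).card < S.card := by
  refine (Finset.card_le_card ((varsE_substE_subset N x E).trans ?_)).trans_lt
    (Finset.card_erase_lt_of_mem hxS)
  exact Finset.union_subset (Finset.erase_subset_erase x hES)
    fun z hz => Finset.mem_erase.2 ⟨fun h => hx (h ▸ hz), hNS hz⟩

theorem varsE_zip_subset (c d : ℕ) (Ms Ns : List Tm) :
    varsE (Ms.zip Ns) ⊆ vars (.app c Ms) ∪ vars (.app d Ns) := by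
  intro z hz
  obtain ⟨p, hp, hz⟩ := mem_varsE.1 hz
  have ⟨hp₁, hp₂⟩ := List.of_mem_zip hp
  simp only [Finset.mem_union, mem_vars_app]
  exact hz.imp (⟨p.1, hp₁, ·⟩) (⟨p.2, hp₂, ·⟩)

theorem exists_isMGU_of_unifies :
    ∀ (E : List (Tm × Tm)) (σ : ℕ → Tm), Unifies σ E → ∃ θ, IsMGU θ E
  | [], _, _ => ⟨.var, isMGU_var_nil⟩
  | (.var x, N) :: E, σ, hσ => by
    obtain ⟨hxN, hE⟩ := unifies_cons.1 hσ
    rw [applySub_var] at hxN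
    by_cases hN : N = .var x
    · subst hN
      obtain ⟨θ, hθ⟩ := exists_isMGU_of_unifies E σ hE
      exact ⟨θ, (isMGU_congr fun _ => by simp).2 hθ⟩
    · have hx := notMem_vars_of_eq_applySub hN hxN
      obtain ⟨θ, hθ⟩ := exists_isMGU_of_unifies (substE N x E) σ ((unifies_substE_of_eq hxN).2 hE)
      exact ⟨_, isMGU_cons_var hx hθ⟩
  | (.app c Ms, .var x) :: E, σ, hσ => by
    obtain ⟨hxN, hE⟩ := unifies_cons.1 (unifies_cons_comm.1 hσ)
    rw [applySub_var] at hxN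
    have hx := notMem_vars_of_eq_applySub Tm.noConfusion hxN
    obtain ⟨θ, hθ⟩ :=
      exists_isMGU_of_unifies (substE (.app c Ms) x E) σ ((unifies_substE_of_eq hxN).2 hE)
    exact ⟨_, (isMGU_congr fun _ => unifies_cons_comm).2 (isMGU_cons_var hx hθ)⟩
  | (.app c Ms, .app d Ns) :: E, σ, hσ => by
    obtain ⟨hcd, hl, -⟩ := applySub_app_eq_app_iff.1 (unifies_cons.1 hσ).1
    subst hcd
    obtain ⟨θ, hθ⟩ := exists_isMGU_of_unifies (Ms.zip Ns ++ E) σ ((unifies_cons_app_app hl).1 hσ)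
    exact ⟨θ, (isMGU_congr fun _ => unifies_cons_app_app hl).2 hθ⟩
termination_by E => ((varsE E).card, sizeOf E)
decreasing_by
  · subst hN
    refine Prod.Lex.right' _ (Finset.card_le_card Finset.subset_union_right) ?_
    simp
  · exact Prod.Lex.left _ _
      (card_varsE_substE_lt hx (by simp) (fun z hz => by simp [hz]) Finset.subset_union_right)
  · exact Prod.Lex.left _ _
      (card_varsE_substE_lt hx (by simp) (fun z hz => by simp [hz]) Finset.subset_union_right)
  · subst hcd
    refine Prod.Lex.right' _ (Finset.card_le_card ?_) ?_
    · rw [varsE_append, varsE_cons]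
      exact Finset.union_subset_union (varsE_zip_subset _ _ Ms Ns) le_rfl
    · have := sizeOf_zip_append_lt E Ms Ns
      simp only [List.cons.sizeOf_spec, Prod.mk.sizeOf_spec, Tm.app.sizeOf_spec]
      omega

/-- First-order unification is decidable and computes most general
unifiers: either there is no unifier, or there is a unifier σ through which
every unifier σ' factors as σ' = σ* ∘ σ. -/
theorem unification_mgu (M₁ M₂ : Tm) :
    (¬ ∃ σ : ℕ → Tm, applySub σ M₁ = applySub σ M₂) ∨
    ∃ σ : ℕ → Tm, applySub σ M₁ = applySub σ M₂ ∧
      ∀ σ' : ℕ → Tm, applySub σ' M₁ = applySub σ' M₂ →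
        ∃ σs : ℕ → Tm, ∀ y, σ' y = applySub σs (σ y) := by
  refine or_iff_not_imp_left.2 fun h => ?_
  obtain ⟨σ, hσ⟩ := not_not.1 h
  obtain ⟨θ, hθ, hθ_most_general⟩ := exists_isMGU_of_unifies [(M₁, M₂)] σ (by simpa)
  exact ⟨θ, by simpa using hθ, fun σ' hσ' => hθ_most_general σ' (by simpa)⟩
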